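/- The cell strategy answers reads correctly: every word in the language cell_v = (read·v)* · ( Σ_{n∈D} write(n)·ok·(read·n)* )* has the property that every read-answer pair in it returns the most recently written value, or the initial value v if no write has occurred before it. Formally: if a word w ∈ cell_v is written as u · read · m · u' , then m equals the value n of the last write(n) occurring in u, or m = v if u contains no write move. -/

import Mathlib

open Computability

/-- Moves of the variable game over a set of data values `D`:
`read`, `write n`, answers `ans n`, and `ok`. -/
inductive Move (D : Type*) where
  | read
  | write (n : D)
  | ans (n : D)
  | ok
deriving DecidableEq

open Move in
/-- `write(n)·ok·(read·n)*` : a write of `n` followed by reads answered by `n`. -/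
def writeBlock {D : Type*} (n : D) : Language (Move D) :=
  ({[write n, ok]} : Language (Move D)) * ({[read, ans n]} : Language (Move D))∗

open Move in
/-- `Σ_{n∈D} write(n)·ok·(read·n)*`. -/
def writeBlocks (D : Type*) : Language (Move D) :=
  ⋃ n : D, writeBlock n

open Move in
/-- The cell language `cell_v = (read·v)* · (Σ_{n∈D} write(n)·ok·(read·n)*)*`,
modelling a storage cell initialized to `v`. -/
def cellLang {D : Type*} (v : D) : Language (Move D) :=
  ({[read, ans v]} : Language (Move D))∗ * (writeBlocks D)∗

/-!
Every word of `cell_v` is a run of the automaton whose state is the current cell content: from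
state `d` it accepts `read·d` and stays in `d`, or accepts `write(n)·ok` and moves to `n`.
Along a run, the state reached after a prefix `u` is the last value written in `u` (the initial
value if there is none), and a read at that point must be answered by the state.
-/

namespace Move

variable {D : Type*}

def store (d : D) : Move D → D
  | write n => n
  | _ => d

end Move

section Cell

variable {D : Type*}

def lastWrite (d : D) (u : List (Move D)) : D :=
  u.foldl Move.store d

lemma lastWrite_eq_self (d : D) {u : List (Move D)} (h : ∀ n : D, Move.write n ∉ u) :
    lastWrite d u = d := by
  induction u with
  | nil => rfl
  | cons x u ih =>
    have hu : ∀ n : D, Move.write n ∉ u := fun n hn => h n (List.mem_cons_of_mem _ hn)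
    cases x with
    | write n => exact absurd List.mem_cons_self (h n)
    | _ => exact ih hu

lemma lastWrite_append_write (d n : D) (u₁ : List (Move D)) {u₂ : List (Move D)}
    (h : ∀ n' : D, Move.write n' ∉ u₂) : lastWrite d (u₁ ++ Move.write n :: u₂) = n := by
  simpa only [lastWrite, List.foldl_append, List.foldl_cons, Move.store]
    using lastWrite_eq_self n h

/-- Words accepted from state `d` by the deterministic automaton whose state is the cell content. -/
inductive IsCellTrace : D → List (Move D) → Prop
  | nil (d : D) : IsCellTrace d []
  | read {d : D} {w : List (Move D)} :
      IsCellTrace d w → IsCellTrace d (Move.read :: Move.ans d :: w)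
  | write {d n : D} {w : List (Move D)} :
      IsCellTrace n w → IsCellTrace d (Move.write n :: Move.ok :: w)

namespace IsCellTrace

lemma reads_append {d : D} {w₁ w₂ : List (Move D)}
    (h₁ : w₁ ∈ ({[Move.read, Move.ans d]} : Language (Move D))∗) (h₂ : IsCellTrace d w₂) :
    IsCellTrace d (w₁ ++ w₂) := by
  rw [Language.mem_kstar] at h₁
  obtain ⟨L, rfl, hL⟩ := h₁
  induction L with
  | nil => simpa using h₂
  | cons a L ih =>
    obtain rfl : a = [Move.read, Move.ans d] := hL a List.mem_cons_self
    simpa using IsCellTrace.read (ih fun y hy => hL y (List.mem_cons_of_mem _ hy))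

lemma of_mem_kstar_writeBlocks {w : List (Move D)} (h : w ∈ (writeBlocks D)∗) (d : D) :
    IsCellTrace d w := by
  rw [Language.mem_kstar] at h
  obtain ⟨L, rfl, hL⟩ := h
  induction L generalizing d with
  | nil => exact .nil d
  | cons a L ih =>
    obtain ⟨n, ha⟩ := Set.mem_iUnion.mp (hL a List.mem_cons_self)
    obtain ⟨_, rfl, reads, hreads, rfl⟩ := Language.mem_mul.mp ha
    have hrest := ih n fun y hy => hL y (List.mem_cons_of_mem _ hy)
    simpa using IsCellTrace.write (d := d) (reads_append hreads hrest)

lemma of_mem_cellLang {v : D} {w : List (Move D)} (h : w ∈ cellLang v) : IsCellTrace v w := by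
  obtain ⟨reads, hreads, blocks, hblocks, rfl⟩ := Language.mem_mul.mp h
  exact reads_append hreads (of_mem_kstar_writeBlocks hblocks v)

lemma ans_eq_lastWrite {d : D} {w : List (Move D)} (h : IsCellTrace d w)
    {u u' : List (Move D)} {m : D} (hsplit : w = u ++ [Move.read, Move.ans m] ++ u') :
    m = lastWrite d u := by
  induction h generalizing u with
  | nil => simp at hsplit
  | read _ ih | write _ ih =>
    rcases u with _ | ⟨x, _ | ⟨y, u⟩⟩
    · simp_all [lastWrite]
    · simp_all
    · simp only [List.cons_append, List.cons.injEq] at hsplit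
      obtain ⟨rfl, rfl, hsplit⟩ := hsplit
      simpa only [lastWrite, List.foldl_cons, Move.store] using ih hsplit

end IsCellTrace

end Cell

theorem cell_answers_reads_correctly {D : Type*} (v : D)
    (w : List (Move D)) (hw : w ∈ cellLang v)
    (u u' : List (Move D)) (m : D)
    (hsplit : w = u ++ [Move.read, Move.ans m] ++ u') :
    ((∀ n : D, Move.write n ∉ u) → m = v) ∧
    (∀ (n : D) (u₁ u₂ : List (Move D)),
        u = u₁ ++ Move.write n :: u₂ → (∀ n' : D, Move.write n' ∉ u₂) →
        m = n) := by
  have hm : m = lastWrite v u := (IsCellTrace.of_mem_cellLang hw).ans_eq_lastWrite hsplit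
  refine ⟨fun hu => hm.trans (lastWrite_eq_self v hu), ?_⟩
  rintro n u₁ u₂ rfl hu₂
  exact hm.trans (lastWrite_append_write v n u₁ hu₂)
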